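/- For every consistent set f of 𝔻^n → 𝔻 and every x ∈ 𝔻^n, the set f[x] = { v | ∃ w ⊑ x with (w ↦ v) ∈ f } has pairwise compatible elements; consequently the finitely generated map f(x) = maxapprx f[x] is well defined. -/
import Mathlib


namespace PETS

/-! ## Approximate values -/

/-- The set `𝔻` of approximate values: binary strings plus `*` (unknown). -/
inductive D where
  | eps  : D
  | b0   : D → D
  | b1   : D → D
  | star : D
deriving DecidableEq

instance : Zero D := ⟨D.star⟩

/-- The approximation relation `⊑` on `𝔻`. -/
inductive Approx : D → D → Prop where
  | star (v : D) : Approx .star v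
  | eps : Approx .eps .eps
  | b0 {v w : D} : Approx v w → Approx (.b0 v) (.b0 w)
  | b1 {v w : D} : Approx v w → Approx (.b1 v) (.b1 w)

/-- Componentwise extension of `⊑` to tuples. -/
def TApprox {n : ℕ} (u v : Fin n → D) : Prop := ∀ i, Approx (u i) (v i)

/-- Compatibility `u △ v`. -/
def Compat (u v : D) : Prop := Approx u v ∨ Approx v u

/-- Componentwise compatibility of tuples. -/
def TCompat {n : ℕ} (u v : Fin n → D) : Prop := ∀ i, Compat (u i) (v i)

/-- The gauge `G(v)` of an approximate value. -/
def D.gauge : D → ℕ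
  | .eps => 1
  | .star => 1
  | .b0 v => v.gauge + 1
  | .b1 v => v.gauge + 1

/-- The gauge of a tuple of approximate values. -/
def tupGauge {n : ℕ} (v : Fin n → D) : ℕ := Finset.univ.sup fun i => (v i).gauge

open Classical in
/-- `maxapprx S`: the `⊑`-greatest element of `S` if it exists, else `*`.
In particular `maxapprx ∅ = *`. -/
noncomputable def maxapprx (S : Set D) : D :=
  if h : ∃ m, m ∈ S ∧ ∀ v ∈ S, Approx v m then h.choose else D.star

/-! ## Generators and consistent sets -/

/-- A finite set of (potential) generators for `𝔻^n → 𝔻`. -/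
abbrev Gens (n : ℕ) := Finset ((Fin n → D) × D)

/-- `f` is a consistent set of generators for `𝔻^n → 𝔻`:
all values are `≠ *` and compatible arguments have compatible values. -/
def ConsistentGens {n : ℕ} (f : Gens n) : Prop :=
  (∀ p ∈ f, p.2 ≠ D.star) ∧
  ∀ p ∈ f, ∀ q ∈ f, TCompat p.1 q.1 → Compat p.2 q.2

/-- `f[x] = { v | ∃ w ⊑ x, (w ↦ v) ∈ f }`. -/
def gensAt {n : ℕ} (f : Gens n) (x : Fin n → D) : Set D :=
  {v | ∃ w : Fin n → D, TApprox w x ∧ (w, v) ∈ f}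

/-- The finitely generated map `f(x) = maxapprx f[x]`. -/
noncomputable def applyGens {n : ℕ} (f : Gens n) (x : Fin n → D) : D :=
  maxapprx (gensAt f x)

/-! ## Terms -/

/-- Terms over the language: variables, the basic symbols `ε`, `s₀`, `s₁`, and
countably many non-basic function symbols `op k` of each arity `a`
(a non-basic symbol is identified by the pair `(k, a)`). -/
inductive Tm where
  | var : ℕ → Tm
  | eps : Tm
  | s0 : Tm → Tm
  | s1 : Tm → Tm
  | app : (k : ℕ) → (a : ℕ) → (Fin a → Tm) → Tm

/-- The length (number of symbols) of a term. -/
def Tm.lh : Tm → ℕ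
  | .var _ => 1
  | .eps => 1
  | .s0 t => t.lh + 1
  | .s1 t => t.lh + 1
  | .app _ a args => (Finset.univ.sum fun i : Fin a => (args i).lh) + 1

/-- The set of variables occurring in a term. -/
def Tm.vars : Tm → Finset ℕ
  | .var x => {x}
  | .eps => ∅
  | .s0 t => t.vars
  | .s1 t => t.vars
  | .app _ a args => Finset.univ.biUnion fun i : Fin a => (args i).vars

/-- Substitution `t[u/x]` of the term `u` for the variable `x` in `t`. -/
def Tm.subst (t : Tm) (x : ℕ) (u : Tm) : Tm :=
  match t with
  | .var y => if y = x then u else .var y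
  | .eps => .eps
  | .s0 s => .s0 (s.subst x u)
  | .s1 s => .s1 (s.subst x u)
  | .app k a args => .app k a fun i => (args i).subst x u

/-- Simultaneous substitution of terms for all variables. -/
def Tm.msubst (σ : ℕ → Tm) : Tm → Tm
  | .var x => σ x
  | .eps => .eps
  | .s0 t => .s0 (t.msubst σ)
  | .s1 t => .s1 (t.msubst σ)
  | .app k a args => .app k a fun i => (args i).msubst σ

/-! ## Frames and assignments -/

/-- An entry of a frame: a non-basic symbol `(k, a)` together with a
generator `(arg, out)` for `𝔻^a → 𝔻`. -/
abbrev Entry := Σ _k : ℕ, Σ a : ℕ, (Fin a → D) × D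

/-- A frame: a finite set of entries, i.e. a finite partial map from
non-basic function symbols to finite sets of generators. -/
abbrev Frame := Finset Entry

/-- `F(f)[x]` for the symbol `f = (k, a)`:
the set `{ v | ∃ w ⊑ x, (w ↦ v) ∈ F(f) }`. -/
def Frame.setAt (F : Frame) (k a : ℕ) (x : Fin a → D) : Set D :=
  {v | ∃ w : Fin a → D, TApprox w x ∧ (⟨k, a, (w, v)⟩ : Entry) ∈ F}

/-- The evaluation `F(f)(x)` of the finitely generated map of the non-basic
symbol `f = (k, a)` in the frame `F`. -/
noncomputable def Frame.app (F : Frame) (k a : ℕ) (x : Fin a → D) : D :=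
  maxapprx (F.setAt k a x)

/-- The gauge of a frame entry. -/
def Entry.gauge (e : Entry) : ℕ := max (tupGauge e.2.2.1) e.2.2.2.gauge

/-- The gauge `G(F)` of a frame. -/
def Frame.gauge (F : Frame) : ℕ := F.sup Entry.gauge

/-- A frame is consistent if each of its sections is a consistent set of
generators (values `≠ *`, compatible arguments have compatible values). -/
def Frame.Consistent (F : Frame) : Prop :=
  (∀ (k a : ℕ) (w : Fin a → D) (v : D), (⟨k, a, (w, v)⟩ : Entry) ∈ F → v ≠ D.star) ∧
  (∀ (k a : ℕ) (w w' : Fin a → D) (v v' : D),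
    (⟨k, a, (w, v)⟩ : Entry) ∈ F → (⟨k, a, (w', v')⟩ : Entry) ∈ F →
    TCompat w w' → Compat v v')

/-- An assignment: a finitely supported map from variables to `𝔻`
(where the zero of `𝔻` is `*`, i.e. `ρ(x) = *` outside the domain). -/
abbrev Assignment := ℕ →₀ D

/-- The gauge `G(ρ)` of an assignment. -/
noncomputable def Assignment.gauge (ρ : Assignment) : ℕ :=
  ρ.support.sup fun x => (ρ x).gauge

/-- The evaluation `⟦t⟧_{F,ρ}` of a term under a frame and an assignment:
basic symbols are evaluated as themselves, non-basic symbols via their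
finitely generated maps. -/
noncomputable def eval (F : Frame) (ρ : Assignment) : Tm → D
  | .var x => ρ x
  | .eps => D.eps
  | .s0 t => D.b0 (eval F ρ t)
  | .s1 t => D.b1 (eval F ρ t)
  | .app k a args => F.app k a fun i => eval F ρ (args i)

/-! ## Nice axiom systems -/

/-- A generalized variable: a variable, `ε`, `s₀(x)` or `s₁(x)`. -/
inductive GVar where
  | var : ℕ → GVar
  | eps : GVar
  | s0 : ℕ → GVar
  | s1 : ℕ → GVar
deriving DecidableEq

/-- The term denoted by a generalized variable. -/
def GVar.toTm : GVar → Tm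
  | .var x => .var x
  | .eps => .eps
  | .s0 x => .s0 (.var x)
  | .s1 x => .s1 (.var x)

/-- The variables of a generalized variable. -/
def GVar.vars : GVar → Finset ℕ
  | .var x => {x}
  | .eps => ∅
  | .s0 x => {x}
  | .s1 x => {x}

/-- Applying an assignment to a generalized variable,
e.g. `ρ(sᵢ(x)) = sᵢ(ρ(x))`. -/
def GVar.evalA (ρ : Assignment) : GVar → D
  | .var x => ρ x
  | .eps => D.eps
  | .s0 x => D.b0 (ρ x)
  | .s1 x => D.b1 (ρ x)

/-- Unifiability of two generalized variables (they have a common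
substitution instance). -/
def GVar.unif : GVar → GVar → Prop
  | .var _, _ => True
  | _, .var _ => True
  | .eps, .eps => True
  | .s0 _, .s0 _ => True
  | .s1 _, .s1 _ => True
  | _, _ => False

/-- An axiom: an equation `f(t₁,…,tₐ) = rhs` where `f` is the non-basic
symbol `(k, a)` and each `tᵢ` is a generalized variable. -/
structure Axm where
  k : ℕ
  a : ℕ
  args : Fin a → GVar
  rhs : Tm

/-- The left-hand side term `f(t₁,…,tₐ)` of an axiom. -/
def Axm.lhs (A : Axm) : Tm := .app A.k A.a fun i => (A.args i).toTm

/-- The variables of the left-hand side of an axiom. -/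
def Axm.lhsVars (A : Axm) : Finset ℕ := Finset.univ.biUnion fun i => (A.args i).vars

/-- All variables of an axiom. -/
def Axm.vars (A : Axm) : Finset ℕ := A.lhsVars ∪ A.rhs.vars

/-- A nice set of axioms: each axiom has the form `f(x⃗) = t`, `f(ε,x⃗) = t`,
`f(x0,x⃗) = t` or `f(x1,x⃗) = t` (so all arguments beyond the first are plain
variables), the variables on the left are pairwise distinct, the right-hand
side variables occur on the left, and no left-hand side occurs twice among
the axioms, also modulo substitution. -/
structure NiceAxioms (Ax : Set Axm) : Prop where
  shape : ∀ A ∈ Ax, ∀ i : Fin A.a, 0 < (i : ℕ) → ∃ x, A.args i = GVar.var x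
  distinct : ∀ A ∈ Ax, ∀ i j : Fin A.a, i ≠ j → Disjoint ((A.args i).vars) ((A.args j).vars)
  rhsVars : ∀ A ∈ Ax, A.rhs.vars ⊆ A.lhsVars
  unique : ∀ A ∈ Ax, ∀ B ∈ Ax, A.k = B.k → ∀ h : A.a = B.a,
    (∀ i : Fin A.a, GVar.unif (A.args i) (B.args (Fin.cast h i))) → A = B

/-! ## Derivations in PETS(Ax) -/

/-- Derivations of the pure equational theory with substitution `PETS(Ax)`:
`Deriv Ax t u` is the type of derivations ending in the equation `t = u`. -/
inductive Deriv (Ax : Set Axm) : Tm → Tm → Type where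
  | ax (A : Axm) (hA : A ∈ Ax) (σ : ℕ → Tm) :
      Deriv Ax (A.lhs.msubst σ) (A.rhs.msubst σ)
  | refl (t : Tm) : Deriv Ax t t
  | symm {t u : Tm} (d : Deriv Ax u t) : Deriv Ax t u
  | trans {t s u : Tm} (d₁ : Deriv Ax t s) (d₂ : Deriv Ax s u) : Deriv Ax t u
  | compat {t u : Tm} (s : Tm) (x : ℕ) (d : Deriv Ax t u) :
      Deriv Ax (s.subst x t) (s.subst x u)
  | subst {t u : Tm} (s : Tm) (x : ℕ) (d : Deriv Ax t u) :
      Deriv Ax (t.subst x s) (u.subst x s)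

namespace Deriv

variable {Ax : Set Axm}

/-- The length `lh(𝒟)` of a derivation: the sum of the lengths of the
equations occurring in it plus the length of the additional syntax
identifying rule applications. -/
def lh : {a b : Tm} → Deriv Ax a b → ℕ
  | _, _, .ax A _ σ => (A.lhs.msubst σ).lh + (A.rhs.msubst σ).lh + 1
  | _, _, .refl t => t.lh + t.lh + 1
  | a, b, .symm d => d.lh + (a.lh + b.lh + 1)
  | a, b, .trans d₁ d₂ => d₁.lh + d₂.lh + (a.lh + b.lh + 1)
  | _, _, @Deriv.compat _ t u s x d =>
      d.lh + ((s.subst x t).lh + (s.subst x u).lh + 1) + (s.lh + 1 + 1)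
  | _, _, @Deriv.subst _ t u s x d =>
      d.lh + ((t.subst x s).lh + (u.subst x s).lh + 1)
        + (t.lh + s.lh + 1 + u.lh + s.lh + 1 + 2)

/-- The set of variables occurring in a derivation. -/
def varsOf : {a b : Tm} → Deriv Ax a b → Finset ℕ
  | _, _, .ax A _ σ => (A.lhs.msubst σ).vars ∪ (A.rhs.msubst σ).vars
  | _, _, .refl t => t.vars
  | _, _, .symm d => d.varsOf
  | _, _, .trans d₁ d₂ => d₁.varsOf ∪ d₂.varsOf
  | _, _, @Deriv.compat _ _ _ s x d => d.varsOf ∪ s.vars ∪ {x}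
  | _, _, @Deriv.subst _ _ _ s x d => d.varsOf ∪ s.vars ∪ {x}

/-- The list (with multiplicities) of variables of a derivation bound by
applications of the Substitution rule. -/
def bvars : {a b : Tm} → Deriv Ax a b → List ℕ
  | _, _, .ax _ _ _ => []
  | _, _, .refl _ => []
  | _, _, .symm d => d.bvars
  | _, _, .trans d₁ d₂ => d₁.bvars ++ d₂.bvars
  | _, _, .compat _ _ d => d.bvars
  | _, _, @Deriv.subst _ _ _ _ x d => x :: d.bvars

/-- The set of axioms of `Ax` occurring (i.e. used by an Axiom rule) in a
derivation. -/
def axiomsUsed : {a b : Tm} → Deriv Ax a b → Set Axm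
  | _, _, .ax A _ _ => {A}
  | _, _, .refl _ => ∅
  | _, _, .symm d => d.axiomsUsed
  | _, _, .trans d₁ d₂ => d₁.axiomsUsed ∪ d₂.axiomsUsed
  | _, _, .compat _ _ d => d.axiomsUsed
  | _, _, .subst _ _ d => d.axiomsUsed

/-- A substitution is an injective renaming of the variables of an axiom. -/
def InjRenaming (A : Axm) (σ : ℕ → Tm) : Prop :=
  (∀ x ∈ A.vars, ∃ y, σ x = Tm.var y) ∧ Set.InjOn σ ↑A.vars

/-- Condition (1) of Variable Normal Form: every application of the Axiom
rule is an injective renaming of an axiom. -/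
def VNFax : {a b : Tm} → Deriv Ax a b → Prop
  | _, _, .ax A _ σ => InjRenaming A σ
  | _, _, .refl _ => True
  | _, _, .symm d => d.VNFax
  | _, _, .trans d₁ d₂ => d₁.VNFax ∧ d₂.VNFax
  | _, _, .compat _ _ d => d.VNFax
  | _, _, .subst _ _ d => d.VNFax

/-- Variable Normal Form: every Axiom rule application is an injective
renaming of an axiom in `Ax`, and every variable occurring in the derivation
either occurs in the final equation or is bound by exactly one application
of the Substitution rule. -/
def VNF {a b : Tm} (d : Deriv Ax a b) : Prop :=
  d.VNFax ∧ ∀ x ∈ d.varsOf, x ∈ a.vars ∪ b.vars ∨ d.bvars.count x = 1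

end Deriv

/-! ## Models, updates, update sequences -/

/-- `F` is a model of `Ax`: for every axiom `t = u` in `Ax` and every
assignment `ρ`, `⟦t⟧_{F,ρ} ⊑ ⟦u⟧_{F,ρ}`. -/
def IsModel (F : Frame) (Ax : Set Axm) : Prop :=
  ∀ A ∈ Ax, ∀ ρ : Assignment, Approx (eval F ρ A.lhs) (eval F ρ A.rhs)

/-- `F` is a `κ`-model of the derivation `d`: `F` is a frame (its sections
are consistent sets) with `G(F) ≤ κ`, and for every axiom `t = u` of `Ax`
occurring in `d` and every assignment `ρ` with `dom(ρ) ⊆ var(d)` and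
`G(ρ) ≤ κ`, we have `⟦t⟧_{F,ρ} ⊑ ⟦u⟧_{F,ρ}`. -/
def IsKModel {Ax : Set Axm} {a b : Tm} (F : Frame) (κ : ℕ) (d : Deriv Ax a b) : Prop :=
  F.Consistent ∧ F.gauge ≤ κ ∧
  ∀ A ∈ d.axiomsUsed, ∀ ρ : Assignment,
    ↑ρ.support ⊆ (↑d.varsOf : Set ℕ) → ρ.gauge ≤ κ →
    Approx (eval F ρ A.lhs) (eval F ρ A.rhs)

/-- An update `f : v⃗ ↦ w` for the non-basic symbol `f = (k, a)`. -/
structure Upd where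
  k : ℕ
  a : ℕ
  v : Fin a → D
  w : D

/-- The gauge `G(v⃗, w)` of an update. -/
def Upd.gauge (u : Upd) : ℕ := max (tupGauge u.v) u.w.gauge

/-- The frame entry corresponding to an update. -/
def Upd.entry (u : Upd) : Entry := ⟨u.k, u.a, (u.v, u.w)⟩

/-- `F * (f : v⃗ ↦ w)`: the frame `F` updated by the update. -/
noncomputable def Frame.apUpd (F : Frame) (u : Upd) : Frame := insert u.entry F

/-- `F * σ` for a sequence of updates `σ`. -/
noncomputable def Frame.apSeq (F : Frame) (σ : List Upd) : Frame :=
  σ.foldl Frame.apUpd F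

/-- `u` is an update based on `F`, `κ` and `d`: a generator `v⃗ ↦ w` with
`G(v⃗, w) ≤ κ` for a non-basic symbol `f`, obtained from an axiom
`f(t⃗) = u'` of `Ax` occurring in `d` and an assignment `ρ` by
`vᵢ = ρ(tᵢ)` and `w = ⟦u'⟧_{F,ρ}`. -/
def IsUpdate {Ax : Set Axm} {a b : Tm} (F : Frame) (κ : ℕ) (d : Deriv Ax a b)
    (u : Upd) : Prop :=
  u.w ≠ D.star ∧ u.gauge ≤ κ ∧
  ∃ A ∈ d.axiomsUsed, ∃ ρ : Assignment,
    u = ⟨A.k, A.a, fun i => (A.args i).evalA ρ, eval F ρ A.rhs⟩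

/-- `σ` is a sequence of updates based on `F`, `κ` and `d`: each update in
the sequence is an update based on the frame produced so far. -/
def IsUpdSeq {Ax : Set Axm} {a b : Tm} (κ : ℕ) (d : Deriv Ax a b) :
    Frame → List Upd → Prop
  | _, [] => True
  | F, u :: σ => IsUpdate F κ d u ∧ IsUpdSeq κ d (F.apUpd u) σ

/-- The gauge `G(σ)` of a sequence of updates. -/
def seqGauge (σ : List Upd) : ℕ := (σ.map Upd.gauge).foldr max 0

/-- The extent `E(σ)` of a sequence of updates (maximal arity used). -/
def seqExt (σ : List Upd) : ℕ := (σ.map Upd.a).foldr max 0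

/-! ## Instructions -/

/-- Instructions: `A[t→u]`, `A[t←u]` for axiom (instances) `t = u`, and
`S↑[t,s/x]`, `S↓[t,s/x]` for terms `t, s` and a variable `x`. -/
inductive Instr where
  | axF : Tm → Tm → Instr
  | axB : Tm → Tm → Instr
  | sUp : Tm → Tm → ℕ → Instr
  | sDown : Tm → Tm → ℕ → Instr

/-- The length of an instruction. -/
def Instr.lh : Instr → ℕ
  | .axF t u => t.lh + u.lh + 1
  | .axB t u => t.lh + u.lh + 1
  | .sUp t s _ => t.lh + s.lh + 1
  | .sDown t s _ => t.lh + s.lh + 1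

/-- The length of a sequence of instructions. -/
def instrsLh (τ : List Instr) : ℕ := (τ.map Instr.lh).sum

/-- An instruction is *for* the derivation `d` if its axiom instructions
carry (injective renamings of) axioms occurring in `d`. -/
def Instr.For {Ax : Set Axm} {a b : Tm} (d : Deriv Ax a b) : Instr → Prop
  | .axF t u => ∃ A ∈ d.axiomsUsed, ∃ σ : ℕ → Tm,
      Deriv.InjRenaming A σ ∧ t = A.lhs.msubst σ ∧ u = A.rhs.msubst σ
  | .axB t u => ∃ A ∈ d.axiomsUsed, ∃ σ : ℕ → Tm,
      Deriv.InjRenaming A σ ∧ t = A.lhs.msubst σ ∧ u = A.rhs.msubst σ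
  | .sUp _ _ _ => True
  | .sDown _ _ _ => True

/-- The instruction sequences `→Inst_𝒟` (first component) and `←Inst_𝒟`
(second component) extracted from a derivation. -/
def Deriv.insts {Ax : Set Axm} : {a b : Tm} → Deriv Ax a b → List Instr × List Instr
  | _, _, .ax A _ σ =>
      ([.axF (A.lhs.msubst σ) (A.rhs.msubst σ)],
       [.axB (A.lhs.msubst σ) (A.rhs.msubst σ)])
  | _, _, .refl _ => ([], [])
  | _, _, .symm d => (d.insts.2, d.insts.1)
  | _, _, .trans d₁ d₂ => (d₁.insts.1 ++ d₂.insts.1, d₂.insts.2 ++ d₁.insts.2)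
  | _, _, .compat _ _ d => d.insts
  | _, _, @Deriv.subst _ t u s x d =>
      (Instr.sUp t s x :: (d.insts.1 ++ [Instr.sDown u s x]),
       Instr.sUp u s x :: (d.insts.2 ++ [Instr.sDown t s x]))

/-- `Ψ(t ← u, ⟨F, ρ⟩)`: for `t` of the form `f(t⃗)`, the update `f : v⃗ ↦ w`
with `vᵢ = ρ(tᵢ)` and `w = ⟦u⟧_{F,ρ}`. -/
noncomputable def Psi (t u : Tm) (F : Frame) (ρ : Assignment) : Upd :=
  match t with
  | .app k a args => ⟨k, a, fun i => eval F ρ (args i), eval F ρ u⟩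
  | _ => ⟨0, 0, Fin.elim0, eval F ρ u⟩

/-- One step of the state transformer `Φ` (the frame `F` is the fixed base
frame; the state consists of the update sequence so far and the current
assignment). -/
noncomputable def PhiStep (F : Frame) (st : List Upd × Assignment) :
    Instr → List Upd × Assignment
  | .axF _ _ => st
  | .axB t u => (st.1 ++ [Psi t u (F.apSeq st.1) st.2], st.2)
  | .sUp _ s x => (st.1, Finsupp.update st.2 x (eval (F.apSeq st.1) st.2 s))
  | .sDown _ _ x => (st.1, st.2.erase x)

/-- The state transformer `Φ(τ, ⟨F, σ, ρ⟩) = ⟨F, σ', ρ'⟩`, processing the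
instruction sequence `τ` from left to right. -/
noncomputable def Phi (F : Frame) (τ : List Instr) (st : List Upd × Assignment) :
    List Upd × Assignment :=
  τ.foldl (PhiStep F) st

/-! ## Sub-derivations -/

/-- `SubDeriv e d`: `e` is a sub-derivation of `d`. -/
inductive SubDeriv {Ax : Set Axm} :
    {a b c d : Tm} → Deriv Ax a b → Deriv Ax c d → Prop where
  | refl {a b : Tm} (d : Deriv Ax a b) : SubDeriv d d
  | symm {a b t u : Tm} {e : Deriv Ax a b} {d : Deriv Ax u t} :
      SubDeriv e d → SubDeriv e (Deriv.symm d)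
  | transL {a b t s u : Tm} {e : Deriv Ax a b} {d₁ : Deriv Ax t s} {d₂ : Deriv Ax s u} :
      SubDeriv e d₁ → SubDeriv e (Deriv.trans d₁ d₂)
  | transR {a b t s u : Tm} {e : Deriv Ax a b} {d₁ : Deriv Ax t s} {d₂ : Deriv Ax s u} :
      SubDeriv e d₂ → SubDeriv e (Deriv.trans d₁ d₂)
  | compat {a b t u : Tm} (s : Tm) (x : ℕ) {e : Deriv Ax a b} {d : Deriv Ax t u} :
      SubDeriv e d → SubDeriv e (Deriv.compat s x d)
  | subst {a b t u : Tm} (s : Tm) (x : ℕ) {e : Deriv Ax a b} {d : Deriv Ax t u} :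
      SubDeriv e d → SubDeriv e (Deriv.subst s x d)


lemma approx_refl (v : D) : Approx v v := by
  induction v with
  | eps => exact .eps
  | b0 v ih => exact .b0 ih
  | b1 v ih => exact .b1 ih
  | star => exact .star _

lemma approx_trans {u v w : D} (h1 : Approx u v) (h2 : Approx v w) : Approx u w := by
  induction h1 generalizing w with
  | star => exact .star w
  | eps => exact h2
  | b0 _ ih => cases h2 with | b0 h => exact .b0 (ih h)
  | b1 _ ih => cases h2 with | b1 h => exact .b1 (ih h)

lemma compat_of_approx {u v x : D} (h1 : Approx u x) (h2 : Approx v x) : Compat u v := by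
  induction h1 generalizing v with
  | star => exact Or.inl (.star v)
  | eps =>
    cases h2 with
    | star => exact Or.inr (.star _)
    | eps => exact Or.inl .eps
  | b0 h ih =>
    cases h2 with
    | star => exact Or.inr (.star _)
    | b0 h' =>
      rcases ih h' with h'' | h''
      · exact Or.inl (.b0 h'')
      · exact Or.inr (.b0 h'')
  | b1 h ih =>
    cases h2 with
    | star => exact Or.inr (.star _)
    | b1 h' =>
      rcases ih h' with h'' | h''
      · exact Or.inl (.b1 h'')
      · exact Or.inr (.b1 h'')

lemma exists_max_of_pairwise_compat (s : Finset D) (hs : s.Nonempty)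
    (hc : ∀ u ∈ s, ∀ v ∈ s, Compat u v) : ∃ m ∈ s, ∀ v ∈ s, Approx v m := by
  classical
  induction s using Finset.induction_on with
  | empty => exact absurd hs (by simp)
  | @insert a s ha ih =>
    rcases s.eq_empty_or_nonempty with rfl | hs'
    · exact ⟨a, by simp, by simp [approx_refl]⟩
    · obtain ⟨m, hm, hmax⟩ := ih hs'
        (fun u hu v hv => hc u (Finset.mem_insert_of_mem hu) v (Finset.mem_insert_of_mem hv))
      rcases hc a (Finset.mem_insert_self a s) m (Finset.mem_insert_of_mem hm) with h | h
      · refine ⟨m, Finset.mem_insert_of_mem hm, fun v hv => ?_⟩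
        rcases Finset.mem_insert.mp hv with rfl | hv
        · exact h
        · exact hmax v hv
      · refine ⟨a, Finset.mem_insert_self a s, fun v hv => ?_⟩
        rcases Finset.mem_insert.mp hv with rfl | hv
        · exact approx_refl v
        · exact approx_trans (hmax v hv) h

/-- For every consistent set `f` of `𝔻^n → 𝔻` and every
`x ∈ 𝔻^n`, the set `f[x] = { v | ∃ w ⊑ x, (w ↦ v) ∈ f }` has pairwise
compatible elements; consequently the finitely generated map
`f(x) = maxapprx f[x]` is well defined (whenever `f[x]` is nonempty,
`maxapprx f[x]` is its `⊑`-greatest element). -/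
theorem gensAt_pairwise_compat {n : ℕ} (f : Gens n) (hf : ConsistentGens f)
    (x : Fin n → D) :
    (∀ v ∈ gensAt f x, ∀ v' ∈ gensAt f x, Compat v v') ∧
    ((gensAt f x).Nonempty →
      maxapprx (gensAt f x) ∈ gensAt f x ∧
      ∀ v ∈ gensAt f x, Approx v (maxapprx (gensAt f x))) := by
  classical
  have hcompat : ∀ v ∈ gensAt f x, ∀ v' ∈ gensAt f x, Compat v v' := by
    rintro v ⟨w, hw, hwf⟩ v' ⟨w', hw', hw'f⟩
    exact hf.2 (w, v) hwf (w', v') hw'f (fun i => compat_of_approx (hw i) (hw' i))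
  refine ⟨hcompat, fun hne => ?_⟩
  have hfin : (gensAt f x).Finite := by
    apply Set.Finite.subset (f.image Prod.snd).finite_toSet
    rintro v ⟨w, _, hwf⟩
    exact Finset.mem_coe.mpr (Finset.mem_image.mpr ⟨(w, v), hwf, rfl⟩)
  obtain ⟨m, hm, hmax⟩ := exists_max_of_pairwise_compat hfin.toFinset
    (by rwa [Set.Finite.toFinset_nonempty])
    (fun u hu v hv =>
      hcompat u (hfin.mem_toFinset.mp hu) v (hfin.mem_toFinset.mp hv))
  have h : ∃ m, m ∈ gensAt f x ∧ ∀ v ∈ gensAt f x, Approx v m :=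
    ⟨m, hfin.mem_toFinset.mp hm, fun v hv => hmax v (hfin.mem_toFinset.mpr hv)⟩
  rw [maxapprx, dif_pos h]
  exact h.choose_spec

end PETS
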